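/- arXiv:1702.08213 — 2 statements merged into one kernel-verified Lean document; each statement's English description precedes it below -/
import Mathlib

section
/- If in addition ρ(ε) < 1, then for every x₀ ∈ E₁ the operator I^ε_{x₀} has a unique fixed point (x̂^ε, ŷ^ε) ∈ C_β^−(E₁ × E₂); equivalently, the integral system x̂(t) = exp(tS)x₀ + ∫₀^t exp((t−s)S) ĝ₁(s, x̂(s), ŷ(s)) ds and ŷ(t) = (1/ε)∫_{−∞}^t exp(((t−s)/ε)F) ĝ₂(s, x̂(s), ŷ(s)) ds, for t ≤ 0, has exactly one solution in C_β^−(E₁ × E₂); this solution satisfies x̂^ε(0) = x₀. -/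
open MeasureTheory Real Filter

noncomputable section

/-- Weighted sup-norm `sup_{t ≤ 0} e^{-β t} ‖φ t‖` on `(-∞,0]`. -/
def negNorm {E : Type*} [NormedAddCommGroup E] (β : ℝ) (φ : ℝ → E) : ℝ :=
  ⨆ t : Set.Iic (0 : ℝ), Real.exp (-β * t.1) * ‖φ t.1‖

/-- Membership in the Banach space `C_β^-(E)` of continuous functions on `(-∞,0]`
with finite weighted sup-norm. -/
def MemCneg {E : Type*} [NormedAddCommGroup E] (β : ℝ) (φ : ℝ → E) : Prop :=
  ContinuousOn φ (Set.Iic 0) ∧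
    BddAbove (Set.range fun t : Set.Iic (0 : ℝ) => Real.exp (-β * t.1) * ‖φ t.1‖)

/-- Weighted sup-norm `sup_{t ≥ 0} e^{-β t} ‖φ t‖` on `[0,∞)`. -/
def posNorm {E : Type*} [NormedAddCommGroup E] (β : ℝ) (φ : ℝ → E) : ℝ :=
  ⨆ t : Set.Ici (0 : ℝ), Real.exp (-β * t.1) * ‖φ t.1‖

/-- Membership in the Banach space `C_β^+(E)` of continuous functions on `[0,∞)`
with finite weighted sup-norm. -/
def MemCpos {E : Type*} [NormedAddCommGroup E] (β : ℝ) (φ : ℝ → E) : Prop :=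
  ContinuousOn φ (Set.Ici 0) ∧
    BddAbove (Set.range fun t : Set.Ici (0 : ℝ) => Real.exp (-β * t.1) * ‖φ t.1‖)

variable {E₁ E₂ : Type*}
  [NormedAddCommGroup E₁] [NormedSpace ℝ E₁]
  [NormedAddCommGroup E₂] [NormedSpace ℝ E₂]

/-- Slow component of the Lyapunov–Perron operator `I^ε_{x₀}`. -/
def LPslow (S : E₁ →L[ℝ] E₁) (g1 : ℝ → E₁ → E₂ → E₁) (x0 : E₁)
    (x : ℝ → E₁) (y : ℝ → E₂) (t : ℝ) : E₁ :=
  NormedSpace.exp (t • S) x0 +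
    ∫ s in (0:ℝ)..t, NormedSpace.exp ((t - s) • S) (g1 s (x s) (y s))

/-- Fast component of the Lyapunov–Perron operator `I^ε_{x₀}`. -/
def LPfast (F : E₂ →L[ℝ] E₂) (g2 : ℝ → E₁ → E₂ → E₂) (ε : ℝ)
    (x : ℝ → E₁) (y : ℝ → E₂) (t : ℝ) : E₂ :=
  (1/ε) • ∫ s in Set.Iic t, NormedSpace.exp (((t - s)/ε) • F) (g2 s (x s) (y s))

/-!
Multiplying by `e^{-βt}` identifies `C_β^-(E₁ × E₂)` with the Banach space of bounded continuous
functions on `(-∞, 0]`, so by Banach's fixed point theorem it suffices that `I^ε_{x₀}` is a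
contraction of `C_β^-`. If `‖h s‖ ≤ D e^{βs}` for `s ≤ 0`, the exponential bounds on the linear
flows give `‖∫₀ᵗ e^{(t-s)S} h(s) ds‖ ≤ D e^{βt} / (γ_s - β)` and
`‖ε⁻¹ ∫_{-∞}^t e^{(t-s)F/ε} h(s) ds‖ ≤ D e^{βt} / (εβ - γ_f)`, both denominators being positive
for `β = -γ/ε`. Applied to `h = ĝᵢ(x̂, ŷ) - ĝᵢ(x̂', ŷ')`, where `D = K ‖(x̂, ŷ) - (x̂', ŷ')‖`,
the two bounds add up to the contraction constant `ρ(ε)`.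
-/

open Set BoundedContinuousFunction

section LinearFlow

variable {E E' : Type*} [NormedAddCommGroup E] [NormedSpace ℝ E]
  [NormedAddCommGroup E'] [NormedSpace ℝ E']

theorem IntervalIntegrable.continuous_clm_apply {A : ℝ → E →L[ℝ] E'} (hA : Continuous A)
    {h : ℝ → E} {a b : ℝ} (hh : IntervalIntegrable h volume a b) :
    IntervalIntegrable (fun s => A s (h s)) volume a b := by
  obtain ⟨C, hC⟩ := isCompact_uIcc.exists_bound_of_continuousOn hA.continuousOn
  rw [intervalIntegrable_iff] at hh ⊢
  refine (hh.norm.const_mul C).mono' ?_ ?_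
  · exact isBoundedBilinearMap_apply.continuous.comp_aestronglyMeasurable₂
      hA.aestronglyMeasurable hh.aestronglyMeasurable
  · filter_upwards [ae_restrict_mem measurableSet_uIoc] with s hs
    exact ((A s).le_opNorm _).trans
      (mul_le_mul_of_nonneg_right (hC s (uIoc_subset_uIcc hs)) (norm_nonneg _))

variable [CompleteSpace E] in
theorem continuous_exp_smul (A : E →L[ℝ] E) {φ : ℝ → ℝ} (hφ : Continuous φ) :
    Continuous fun s => NormedSpace.exp (φ s • A) := by
  let +nondep : NormedAlgebra ℚ (E →L[ℝ] E) := .restrictScalars ℚ ℝ _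
  exact NormedSpace.exp_continuous.comp (hφ.smul continuous_const)

variable [CompleteSpace E] in
theorem exp_add_smul_apply (A : E →L[ℝ] E) (a b : ℝ) (v : E) :
    NormedSpace.exp ((a + b) • A) v = NormedSpace.exp (a • A) (NormedSpace.exp (b • A) v) := by
  let +nondep : NormedAlgebra ℚ (E →L[ℝ] E) := .restrictScalars ℚ ℝ _
  rw [add_smul, NormedSpace.exp_add_of_commute ((Commute.refl A).smul_left a |>.smul_right b)]
  rfl

theorem exp_mul_sub_mul_exp (a β t s : ℝ) :
    Real.exp (a * (t - s)) * Real.exp (β * s) = Real.exp (a * t) * Real.exp ((β - a) * s) := by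
  rw [← Real.exp_add, ← Real.exp_add]; ring_nf

theorem norm_integral_exp_smul_le {S : E →L[ℝ] E} {γs β D t : ℝ} (hβ : β < γs)
    (hS : ∀ t ≤ (0:ℝ), ∀ x : E, ‖NormedSpace.exp (t • S) x‖ ≤ Real.exp (γs * t) * ‖x‖)
    {h : ℝ → E} (hh : ∀ s ≤ (0:ℝ), ‖h s‖ ≤ D * Real.exp (β * s)) (ht : t ≤ 0) :
    ‖∫ s in (0:ℝ)..t, NormedSpace.exp ((t - s) • S) (h s)‖ ≤ D / (γs - β) * Real.exp (β * t) := by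
  have hD : 0 ≤ D := by simpa using (norm_nonneg _).trans (hh 0 le_rfl)
  set bound := fun s => D * Real.exp (γs * t) * Real.exp ((β - γs) * s)
  have hint : IntegrableOn bound (Ioi t) :=
    (integrableOn_exp_mul_Ioi (by linarith) t).const_mul _
  have hle : ∀ s ∈ Ioc t 0, ‖NormedSpace.exp ((t - s) • S) (h s)‖ ≤ bound s := fun s hs =>
    calc _ ≤ Real.exp (γs * (t - s)) * ‖h s‖ := hS _ (by linarith [hs.1]) _
      _ ≤ Real.exp (γs * (t - s)) * (D * Real.exp (β * s)) := by gcongr; exact hh s hs.2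
      _ = bound s := by simp only [bound]; rw [mul_left_comm, exp_mul_sub_mul_exp]; ring
  rw [intervalIntegral.norm_integral_eq_norm_integral_uIoc, uIoc_of_ge ht]
  calc _ ≤ ∫ s in Ioc t 0, bound s :=
        norm_integral_le_of_norm_le (hint.mono_set Ioc_subset_Ioi_self)
          ((ae_restrict_iff' measurableSet_Ioc).2 (.of_forall hle))
    _ ≤ ∫ s in Ioi t, bound s :=
        setIntegral_mono_set hint (.of_forall fun s => by positivity)
          Ioc_subset_Ioi_self.eventuallyLE
    _ = D / (γs - β) * Real.exp (β * t) := by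
        have hexp : Real.exp (β * t) = Real.exp (γs * t) * Real.exp ((β - γs) * t) := by
          rw [← Real.exp_add]; ring_nf
        rw [integral_const_mul, integral_exp_mul_Ioi (by linarith), hexp, ← neg_sub β γs, div_neg]
        ring

theorem norm_exp_div_smul_apply_le {F : E →L[ℝ] E} {γf β ε D t s : ℝ} (hε : 0 < ε)
    (hF : ∀ t ≥ (0:ℝ), ∀ y : E, ‖NormedSpace.exp (t • F) y‖ ≤ Real.exp (γf * t) * ‖y‖)
    {h : ℝ → E} (hh : ∀ s ≤ (0:ℝ), ‖h s‖ ≤ D * Real.exp (β * s)) (ht : t ≤ 0) (hs : s ≤ t) :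
    ‖NormedSpace.exp (((t - s) / ε) • F) (h s)‖ ≤
      D * Real.exp (γf / ε * t) * Real.exp ((β - γf / ε) * s) :=
  calc _ ≤ Real.exp (γf * ((t - s) / ε)) * ‖h s‖ := hF _ (div_nonneg (by linarith) hε.le) _
    _ ≤ Real.exp (γf / ε * (t - s)) * (D * Real.exp (β * s)) := by
        rw [mul_div_assoc', div_mul_eq_mul_div]; gcongr; exact hh s (hs.trans ht)
    _ = _ := by rw [mul_left_comm, exp_mul_sub_mul_exp]; ring

variable [CompleteSpace E] in
theorem integrableOn_Iic_exp_div_smul {F : E →L[ℝ] E} {γf β ε D t : ℝ} (hε : 0 < ε)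
    (hβ : γf < ε * β)
    (hF : ∀ t ≥ (0:ℝ), ∀ y : E, ‖NormedSpace.exp (t • F) y‖ ≤ Real.exp (γf * t) * ‖y‖)
    {h : ℝ → E} (hm : AEStronglyMeasurable h) (hh : ∀ s ≤ (0:ℝ), ‖h s‖ ≤ D * Real.exp (β * s))
    (ht : t ≤ 0) :
    IntegrableOn (fun s => NormedSpace.exp (((t - s) / ε) • F) (h s)) (Iic t) := by
  have hrate : 0 < β - γf / ε := by rw [sub_pos, div_lt_iff₀' hε]; exact hβ
  refine ((integrableOn_exp_mul_Iic hrate t).const_mul (D * Real.exp (γf / ε * t))).mono' ?_ ?_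
  · exact isBoundedBilinearMap_apply.continuous.comp_aestronglyMeasurable₂
      (continuous_exp_smul F ((continuous_sub_left t).div_const ε)).aestronglyMeasurable
      hm.restrict
  · exact (ae_restrict_iff' measurableSet_Iic).2
      (.of_forall fun s hs => norm_exp_div_smul_apply_le hε hF hh ht hs)

theorem norm_setIntegral_Iic_exp_div_smul_le {F : E →L[ℝ] E} {γf β ε D t : ℝ} (hε : 0 < ε)
    (hβ : γf < ε * β)
    (hF : ∀ t ≥ (0:ℝ), ∀ y : E, ‖NormedSpace.exp (t • F) y‖ ≤ Real.exp (γf * t) * ‖y‖)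
    {h : ℝ → E} (hh : ∀ s ≤ (0:ℝ), ‖h s‖ ≤ D * Real.exp (β * s)) (ht : t ≤ 0) :
    ‖∫ s in Iic t, NormedSpace.exp (((t - s) / ε) • F) (h s)‖ ≤
      ε * D / (ε * β - γf) * Real.exp (β * t) := by
  have hrate : 0 < β - γf / ε := by rw [sub_pos, div_lt_iff₀' hε]; exact hβ
  calc _ ≤ ∫ s in Iic t, D * Real.exp (γf / ε * t) * Real.exp ((β - γf / ε) * s) :=
        norm_integral_le_of_norm_le ((integrableOn_exp_mul_Iic hrate t).const_mul _)
          ((ae_restrict_iff' measurableSet_Iic).2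
            (.of_forall fun s hs => norm_exp_div_smul_apply_le hε hF hh ht hs))
    _ = _ := by
        have hexp : Real.exp (β * t) = Real.exp (γf / ε * t) * Real.exp ((β - γf / ε) * t) := by
          rw [← Real.exp_add]; ring_nf
        rw [integral_const_mul, integral_exp_mul_Iic hrate, hexp]
        field_simp

variable [CompleteSpace E]

theorem continuous_exp_smul_add_integral (S : E →L[ℝ] E) (x0 : E) {h : ℝ → E}
    (hh : ∀ a b, IntervalIntegrable h volume a b) :
    Continuous fun t =>
      NormedSpace.exp (t • S) x0 + ∫ s in (0:ℝ)..t, NormedSpace.exp ((t - s) • S) (h s) := by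
  have hint : ∀ a b, IntervalIntegrable (fun s => NormedSpace.exp ((-s) • S) (h s)) volume a b :=
    fun a b => (hh a b).continuous_clm_apply (continuous_exp_smul S continuous_neg)
  have hfactor : ∀ t, ∫ s in (0:ℝ)..t, NormedSpace.exp ((t - s) • S) (h s) =
      NormedSpace.exp (t • S) (∫ s in (0:ℝ)..t, NormedSpace.exp ((-s) • S) (h s)) := fun t => by
    rw [← ContinuousLinearMap.intervalIntegral_comp_comm _ (hint 0 t)]
    refine intervalIntegral.integral_congr fun s _ => ?_
    rw [sub_eq_add_neg, exp_add_smul_apply]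
  simp_rw [hfactor, ← map_add]
  exact (continuous_exp_smul S continuous_id).clm_apply
    (continuous_const.add (intervalIntegral.continuous_primitive hint 0))

theorem continuousOn_setIntegral_Iic_exp_div_smul {F : E →L[ℝ] E} {γf β ε D : ℝ} (hε : 0 < ε)
    (hβ : γf < ε * β)
    (hF : ∀ t ≥ (0:ℝ), ∀ y : E, ‖NormedSpace.exp (t • F) y‖ ≤ Real.exp (γf * t) * ‖y‖)
    {h : ℝ → E} (hm : AEStronglyMeasurable h) (hh : ∀ s ≤ (0:ℝ), ‖h s‖ ≤ D * Real.exp (β * s))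
    (hloc : ∀ a b, IntervalIntegrable h volume a b) :
    ContinuousOn (fun t => ∫ s in Iic t, NormedSpace.exp (((t - s) / ε) • F) (h s)) (Iic 0) := by
  set ψ := fun s => NormedSpace.exp ((-s / ε) • F) (h s)
  have hψ : IntegrableOn ψ (Iic 0) := by
    simpa [ψ, neg_div] using integrableOn_Iic_exp_div_smul hε hβ hF hm hh le_rfl
  have hψloc : ∀ a b, IntervalIntegrable ψ volume a b := fun a b =>
    (hloc a b).continuous_clm_apply (continuous_exp_smul F (continuous_neg.div_const ε))
  have hfactor : ∀ t ∈ Iic (0:ℝ), ∫ s in Iic t, NormedSpace.exp (((t - s) / ε) • F) (h s) =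
      NormedSpace.exp ((t / ε) • F) ((∫ s in Iic 0, ψ s) + ∫ s in (0:ℝ)..t, ψ s) := by
    intro t (ht : t ≤ 0)
    have hψt := hψ.mono_set (Iic_subset_Iic.2 ht)
    rw [← intervalIntegral.integral_Iic_sub_Iic hψ hψt, add_sub_cancel,
      ← ContinuousLinearMap.integral_comp_comm _ hψt]
    refine setIntegral_congr_fun measurableSet_Iic fun s _ => ?_
    rw [sub_div, sub_eq_add_neg, ← neg_div, exp_add_smul_apply]
  refine ContinuousOn.congr ?_ hfactor
  exact ((continuous_exp_smul F (continuous_id.div_const ε)).clm_apply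
    (continuous_const.add (intervalIntegral.continuous_primitive hψloc 0))).continuousOn

end LinearFlow

section WeightedSpace

variable {V : Type*} [NormedAddCommGroup V]

theorem exp_neg_mul_mul_le_iff {β t a C : ℝ} :
    Real.exp (-β * t) * a ≤ C ↔ a ≤ C * Real.exp (β * t) := by
  rw [neg_mul, Real.exp_neg, inv_mul_le_iff₀ (Real.exp_pos _), mul_comm]

theorem MemCneg.exists_norm_le {β : ℝ} {φ : ℝ → V} (hφ : MemCneg β φ) :
    ∃ C, ∀ t ≤ (0:ℝ), ‖φ t‖ ≤ C * Real.exp (β * t) := by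
  obtain ⟨C, hC⟩ := hφ.2
  exact ⟨C, fun t ht => exp_neg_mul_mul_le_iff.1 (hC ⟨⟨t, ht⟩, rfl⟩)⟩

theorem memCneg_of_norm_le {β C : ℝ} {φ : ℝ → V} (hc : ContinuousOn φ (Iic 0))
    (hb : ∀ t ≤ (0:ℝ), ‖φ t‖ ≤ C * Real.exp (β * t)) : MemCneg β φ := by
  refine ⟨hc, C, ?_⟩
  rintro _ ⟨⟨t, ht⟩, rfl⟩
  exact exp_neg_mul_mul_le_iff.2 (hb t ht)

variable [NormedSpace ℝ V]

def toWeighted (β : ℝ) (φ : ℝ → V) (hφ : MemCneg β φ) : Iic (0:ℝ) →ᵇ V :=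
  .ofNormedAddCommGroup (fun τ => Real.exp (-β * τ) • φ τ)
    ((Real.continuous_exp.comp (continuous_const.mul continuous_subtype_val)).smul
      hφ.1.domRestrict) (negNorm β φ) fun τ => by
    rw [norm_smul, Real.norm_of_nonneg (Real.exp_pos _).le]
    exact le_ciSup hφ.2 τ

def ofWeighted (β : ℝ) (w : Iic (0:ℝ) →ᵇ V) : ℝ → V :=
  IicExtend fun τ => Real.exp (β * τ) • w τ

variable {β : ℝ}

theorem ofWeighted_of_le (w : Iic (0:ℝ) →ᵇ V) {t : ℝ} (ht : t ≤ 0) :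
    ofWeighted β w t = Real.exp (β * t) • w ⟨t, ht⟩ :=
  IicExtend_of_mem _ (mem_Iic.2 ht)

theorem continuous_ofWeighted (w : Iic (0:ℝ) →ᵇ V) : Continuous (ofWeighted β w) :=
  ((Real.continuous_exp.comp (continuous_const.mul continuous_subtype_val)).smul w.continuous).comp
    ((continuous_const.min continuous_id).subtype_mk fun _ => mem_Iic.2 (min_le_left _ _))

theorem norm_ofWeighted_le (w : Iic (0:ℝ) →ᵇ V) {t : ℝ} (ht : t ≤ 0) :
    ‖ofWeighted β w t‖ ≤ ‖w‖ * Real.exp (β * t) := by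
  rw [ofWeighted_of_le w ht, norm_smul, Real.norm_of_nonneg (Real.exp_pos _).le, mul_comm]
  gcongr
  exact w.norm_coe_le_norm _

theorem norm_ofWeighted_sub_le (w w' : Iic (0:ℝ) →ᵇ V) {t : ℝ} (ht : t ≤ 0) :
    ‖ofWeighted β w t - ofWeighted β w' t‖ ≤ dist w w' * Real.exp (β * t) := by
  rw [ofWeighted_of_le w ht, ofWeighted_of_le w' ht, ← smul_sub, norm_smul,
    Real.norm_of_nonneg (Real.exp_pos _).le, mul_comm, ← dist_eq_norm]
  gcongr
  exact w.dist_coe_le_dist _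

theorem memCneg_ofWeighted (w : Iic (0:ℝ) →ᵇ V) : MemCneg β (ofWeighted β w) := by
  refine memCneg_of_norm_le (C := ‖w‖) (continuous_ofWeighted w).continuousOn fun t ht => ?_
  exact norm_ofWeighted_le w ht

theorem toWeighted_eq_iff {φ : ℝ → V} (hφ : MemCneg β φ) (w : Iic (0:ℝ) →ᵇ V) :
    toWeighted β φ hφ = w ↔ EqOn φ (ofWeighted β w) (Iic 0) := by
  have key : ∀ t (ht : t ≤ 0), toWeighted β φ hφ ⟨t, ht⟩ = w ⟨t, ht⟩ ↔
      φ t = ofWeighted β w t := fun t ht => by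
    rw [ofWeighted_of_le w ht, ← inv_smul_eq_iff₀ (Real.exp_pos _).ne', ← Real.exp_neg, ← neg_mul]
    rfl
  refine ⟨fun h t ht => (key t ht).1 (h ▸ rfl), fun h => ?_⟩
  ext ⟨t, ht⟩
  exact (key t ht).2 (h ht)

theorem dist_toWeighted_le {φ ψ : ℝ → V} (hφ : MemCneg β φ) (hψ : MemCneg β ψ) {C : ℝ}
    (hC : 0 ≤ C) (h : ∀ t ≤ (0:ℝ), ‖φ t - ψ t‖ ≤ C * Real.exp (β * t)) :
    dist (toWeighted β φ hφ) (toWeighted β ψ hψ) ≤ C := by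
  refine (BoundedContinuousFunction.dist_le hC).2 fun ⟨t, ht⟩ => ?_
  rw [dist_eq_norm]
  show ‖Real.exp (-β * t) • φ t - Real.exp (-β * t) • ψ t‖ ≤ C
  rw [← smul_sub, norm_smul, Real.norm_of_nonneg (Real.exp_pos _).le, exp_neg_mul_mul_le_iff]
  exact h t ht

theorem exists_unique_fixedPoint_memCneg [CompleteSpace V] {ρ : ℝ} (hρ0 : 0 ≤ ρ) (hρ1 : ρ < 1)
    (Φ : (ℝ → V) → ℝ → V)
    (hloc : ∀ p q, EqOn p q (Iic 0) → EqOn (Φ p) (Φ q) (Iic 0))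
    (hmem : ∀ p, Continuous p → MemCneg β p → MemCneg β (Φ p))
    (hlip : ∀ p q, Continuous p → Continuous q → MemCneg β p → MemCneg β q → ∀ C,
      (∀ s ≤ (0:ℝ), ‖p s - q s‖ ≤ C * Real.exp (β * s)) →
      ∀ t ≤ (0:ℝ), ‖Φ p t - Φ q t‖ ≤ ρ * C * Real.exp (β * t)) :
    ∃ p, MemCneg β p ∧ EqOn (Φ p) p (Iic 0) ∧
      ∀ q, MemCneg β q → EqOn (Φ q) q (Iic 0) → EqOn q p (Iic 0) := by
  let T : (Iic (0:ℝ) →ᵇ V) → Iic (0:ℝ) →ᵇ V := fun w =>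
    toWeighted β (Φ (ofWeighted β w)) (hmem _ (continuous_ofWeighted w) (memCneg_ofWeighted w))
  have hT : ContractingWith ⟨ρ, hρ0⟩ T := by
    refine ⟨hρ1, LipschitzWith.of_dist_le_mul fun w w' => dist_toWeighted_le _ _
      (by positivity) fun t ht => ?_⟩
    exact hlip _ _ (continuous_ofWeighted w) (continuous_ofWeighted w') (memCneg_ofWeighted w)
      (memCneg_ofWeighted w') _ (fun s hs => norm_ofWeighted_sub_le w w' hs) t ht
  have : Nonempty (Iic (0:ℝ) →ᵇ V) := ⟨0⟩
  set w := hT.fixedPoint T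
  refine ⟨ofWeighted β w, memCneg_ofWeighted w,
    (toWeighted_eq_iff _ w).1 hT.fixedPoint_isFixedPt, fun q hq hfix => ?_⟩
  have hq' : EqOn (ofWeighted β (toWeighted β q hq)) q (Iic 0) :=
    (((toWeighted_eq_iff hq _).1 rfl).symm)
  have hTq : T (toWeighted β q hq) = toWeighted β q hq := by
    refine (toWeighted_eq_iff _ _).2 fun t ht => ?_
    rw [hloc _ _ hq' ht, hfix ht, hq' ht]
  intro t ht
  rw [← hq' ht, hT.fixedPoint_unique hTq]

end WeightedSpace

section Nonlinearity

variable {X Y Z : Type*} [NormedAddCommGroup X] [NormedAddCommGroup Y] [NormedAddCommGroup Z]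
  [MeasurableSpace Z] {K β : ℝ} {g : ℝ → X → Y → Z}

structure IsAdmissibleNonlinearity (K β : ℝ) (g : ℝ → X → Y → Z) : Prop where
  measurable : ∀ x y, Measurable fun t => g t x y
  locallyBounded : ∀ x y r, ∃ M, ∀ t : ℝ, |t| ≤ r → ‖g t x y‖ ≤ M
  lipschitz : ∀ t x₁ y₁ x₂ y₂, ‖g t x₁ y₁ - g t x₂ y₂‖ ≤ K * (‖x₁ - x₂‖ + ‖y₁ - y₂‖)
  growth : ∃ M, ∀ t ≤ (0:ℝ), ‖g t 0 0‖ ≤ M * Real.exp (β * t)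

theorem IsAdmissibleNonlinearity.norm_sub_le (hg : IsAdmissibleNonlinearity K β g) (t : ℝ)
    (u v : WithLp 1 (X × Y)) : ‖g t u.fst u.snd - g t v.fst v.snd‖ ≤ K * ‖u - v‖ := by
  rw [WithLp.prod_norm_eq_of_L1]
  exact hg.lipschitz t _ _ _ _

theorem IsAdmissibleNonlinearity.norm_le (hg : IsAdmissibleNonlinearity K β g) (t : ℝ)
    (u : WithLp 1 (X × Y)) : ‖g t u.fst u.snd‖ ≤ ‖g t 0 0‖ + K * ‖u‖ := by
  have := (norm_sub_norm_le _ _).trans (hg.norm_sub_le t u 0)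
  rw [sub_zero, WithLp.zero_fst, WithLp.zero_snd] at this
  linarith

theorem IsAdmissibleNonlinearity.exists_norm_comp_le (hg : IsAdmissibleNonlinearity K β g)
    (hK : 0 ≤ K) {p : ℝ → WithLp 1 (X × Y)} (hp : MemCneg β p) :
    ∃ D, ∀ s ≤ (0:ℝ), ‖g s (p s).fst (p s).snd‖ ≤ D * Real.exp (β * s) := by
  obtain ⟨M, hM⟩ := hg.growth
  obtain ⟨C, hC⟩ := hp.exists_norm_le
  refine ⟨M + K * C, fun s hs => ?_⟩
  calc _ ≤ ‖g s 0 0‖ + K * ‖p s‖ := hg.norm_le s (p s)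
    _ ≤ M * Real.exp (β * s) + K * (C * Real.exp (β * s)) :=
        add_le_add (hM s hs) (mul_le_mul_of_nonneg_left (hC s hs) hK)
    _ = _ := by ring

theorem IsAdmissibleNonlinearity.norm_comp_sub_le (hg : IsAdmissibleNonlinearity K β g)
    (hK : 0 ≤ K) {p q : ℝ → WithLp 1 (X × Y)} {C : ℝ}
    (hpq : ∀ s ≤ (0:ℝ), ‖p s - q s‖ ≤ C * Real.exp (β * s)) (s : ℝ) (hs : s ≤ 0) :
    ‖g s (p s).fst (p s).snd - g s (q s).fst (q s).snd‖ ≤ K * C * Real.exp (β * s) := by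
  rw [mul_assoc]
  exact (hg.norm_sub_le s _ _).trans (mul_le_mul_of_nonneg_left (hpq s hs) hK)

variable [MeasurableSpace X] [BorelSpace X] [SecondCountableTopology X]
  [MeasurableSpace Y] [BorelSpace Y] [SecondCountableTopology Y]
  [BorelSpace Z] [SecondCountableTopology Z]

theorem IsAdmissibleNonlinearity.stronglyMeasurable_comp (hg : IsAdmissibleNonlinearity K β g)
    {p : ℝ → WithLp 1 (X × Y)} (hp : Continuous p) :
    StronglyMeasurable fun s => g s (p s).fst (p s).snd := by
  have hcont : ∀ t, Continuous fun z : X × Y => g t z.1 z.2 := fun t =>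
    (LipschitzWith.of_dist_le' (f := fun u : WithLp 1 (X × Y) => g t u.fst u.snd) fun u v => by
      simpa only [dist_eq_norm] using hg.norm_sub_le t u v).continuous.comp
      (WithLp.prod_continuous_toLp 1 X Y)
  exact (stronglyMeasurable_uncurry_of_continuous_of_stronglyMeasurable hcont
    fun z => (hg.measurable z.1 z.2).stronglyMeasurable).comp_measurable
    (((WithLp.continuous_fst 1 X Y |>.comp hp).measurable.prodMk
      (WithLp.continuous_snd 1 X Y |>.comp hp).measurable).prodMk measurable_id)

theorem IsAdmissibleNonlinearity.intervalIntegrable_comp (hg : IsAdmissibleNonlinearity K β g)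
    (hK : 0 ≤ K) {p : ℝ → WithLp 1 (X × Y)} (hp : Continuous p) (a b : ℝ) :
    IntervalIntegrable (fun s => g s (p s).fst (p s).snd) volume a b := by
  obtain ⟨M, hM⟩ := hg.locallyBounded 0 0 (max |a| |b|)
  obtain ⟨C, hC⟩ := isCompact_uIcc.exists_bound_of_continuousOn hp.continuousOn
  refine (intervalIntegrable_const (c := M + K * C)).mono_fun'
    (hg.stronglyMeasurable_comp hp).aestronglyMeasurable ?_
  filter_upwards [ae_restrict_mem measurableSet_uIoc] with s hs
  have hs' := uIoc_subset_uIcc hs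
  have hsr : |s| ≤ max |a| |b| := by
    rcases mem_uIcc.1 hs' with ⟨h1, h2⟩ | ⟨h1, h2⟩
    · exact abs_le_max_abs_abs h1 h2
    · exact (abs_le_max_abs_abs h1 h2).trans_eq (max_comm _ _)
  calc _ ≤ ‖g s 0 0‖ + K * ‖p s‖ := hg.norm_le s (p s)
    _ ≤ M + K * C := add_le_add (hM s hsr) (mul_le_mul_of_nonneg_left (hC s hs') hK)

end Nonlinearity

section SlowComponent

variable {X Y : Type*} [NormedAddCommGroup X] [NormedSpace ℝ X] {S : X →L[ℝ] X}
  {g : ℝ → X → Y → X} {x0 : X} {x x' : ℝ → X} {y y' : ℝ → Y} {γs β D t : ℝ}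

theorem LPslow_zero : LPslow S g x0 x y 0 = x0 := by
  simp [LPslow]

theorem norm_LPslow_le (hβ : β < γs)
    (hS : ∀ t ≤ (0:ℝ), ∀ x : X, ‖NormedSpace.exp (t • S) x‖ ≤ Real.exp (γs * t) * ‖x‖)
    (hg : ∀ s ≤ (0:ℝ), ‖g s (x s) (y s)‖ ≤ D * Real.exp (β * s)) (ht : t ≤ 0) :
    ‖LPslow S g x0 x y t‖ ≤ (‖x0‖ + D / (γs - β)) * Real.exp (β * t) := by
  have hexp : Real.exp (γs * t) ≤ Real.exp (β * t) := Real.exp_le_exp.2 (by nlinarith)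
  calc _ ≤ Real.exp (γs * t) * ‖x0‖ + D / (γs - β) * Real.exp (β * t) :=
        (norm_add_le _ _).trans (add_le_add (hS t ht x0) (norm_integral_exp_smul_le hβ hS hg ht))
    _ ≤ _ := by rw [add_mul, mul_comm ‖x0‖]; gcongr

theorem norm_LPslow_sub_le [CompleteSpace X] (hβ : β < γs)
    (hS : ∀ t ≤ (0:ℝ), ∀ x : X, ‖NormedSpace.exp (t • S) x‖ ≤ Real.exp (γs * t) * ‖x‖)
    (hint : IntervalIntegrable (fun s => g s (x s) (y s)) volume 0 t)
    (hint' : IntervalIntegrable (fun s => g s (x' s) (y' s)) volume 0 t)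
    (hg : ∀ s ≤ (0:ℝ), ‖g s (x s) (y s) - g s (x' s) (y' s)‖ ≤ D * Real.exp (β * s))
    (ht : t ≤ 0) :
    ‖LPslow S g x0 x y t - LPslow S g x0 x' y' t‖ ≤ D / (γs - β) * Real.exp (β * t) := by
  have hA := continuous_exp_smul S (continuous_sub_left t)
  rw [LPslow, LPslow, add_sub_add_left_eq_sub, ← intervalIntegral.integral_sub
    (hint.continuous_clm_apply hA) (hint'.continuous_clm_apply hA)]
  simp_rw [← map_sub]
  exact norm_integral_exp_smul_le hβ hS hg ht

end SlowComponent

section FastComponent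

variable {X Y : Type*} [NormedAddCommGroup Y] [NormedSpace ℝ Y] {F : Y →L[ℝ] Y}
  {g : ℝ → X → Y → Y} {x x' : ℝ → X} {y y' : ℝ → Y} {γf β ε D t : ℝ}

theorem norm_LPfast_le (hε : 0 < ε) (hβ : γf < ε * β)
    (hF : ∀ t ≥ (0:ℝ), ∀ y : Y, ‖NormedSpace.exp (t • F) y‖ ≤ Real.exp (γf * t) * ‖y‖)
    (hg : ∀ s ≤ (0:ℝ), ‖g s (x s) (y s)‖ ≤ D * Real.exp (β * s)) (ht : t ≤ 0) :
    ‖LPfast F g ε x y t‖ ≤ D / (ε * β - γf) * Real.exp (β * t) := by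
  rw [LPfast, norm_smul, Real.norm_of_nonneg (by positivity)]
  calc _ ≤ 1 / ε * (ε * D / (ε * β - γf) * Real.exp (β * t)) := by
        gcongr; exact norm_setIntegral_Iic_exp_div_smul_le hε hβ hF hg ht
    _ = _ := by field_simp

theorem norm_LPfast_sub_le [CompleteSpace Y] (hε : 0 < ε) (hβ : γf < ε * β)
    (hF : ∀ t ≥ (0:ℝ), ∀ y : Y, ‖NormedSpace.exp (t • F) y‖ ≤ Real.exp (γf * t) * ‖y‖)
    (hint : IntegrableOn (fun s => NormedSpace.exp (((t - s) / ε) • F) (g s (x s) (y s)))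
      (Iic t))
    (hint' : IntegrableOn (fun s => NormedSpace.exp (((t - s) / ε) • F) (g s (x' s) (y' s)))
      (Iic t))
    (hg : ∀ s ≤ (0:ℝ), ‖g s (x s) (y s) - g s (x' s) (y' s)‖ ≤ D * Real.exp (β * s))
    (ht : t ≤ 0) :
    ‖LPfast F g ε x y t - LPfast F g ε x' y' t‖ ≤ D / (ε * β - γf) * Real.exp (β * t) := by
  have hsub : LPfast F g ε x y t - LPfast F g ε x' y' t =
      LPfast F (fun s _ _ => g s (x s) (y s) - g s (x' s) (y' s)) ε x y t := by
    rw [LPfast, LPfast, LPfast, ← smul_sub, ← integral_sub hint hint']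
    simp_rw [← map_sub]
  rw [hsub]
  exact norm_LPfast_le hε hβ hF hg ht

end FastComponent

section LyapunovPerronMap

/-- `WithLp 1` equips `E₁ × E₂` with the sum norm of `C_β^-(E₁ × E₂)`. -/
def lyapunovPerronMap (S : E₁ →L[ℝ] E₁) (F : E₂ →L[ℝ] E₂) (g1 : ℝ → E₁ → E₂ → E₁)
    (g2 : ℝ → E₁ → E₂ → E₂) (ε : ℝ) (x0 : E₁) (p : ℝ → WithLp 1 (E₁ × E₂)) (t : ℝ) :
    WithLp 1 (E₁ × E₂) :=
  WithLp.toLp 1 (LPslow S g1 x0 (fun s => (p s).fst) (fun s => (p s).snd) t,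
    LPfast F g2 ε (fun s => (p s).fst) (fun s => (p s).snd) t)

variable {S : E₁ →L[ℝ] E₁} {F : E₂ →L[ℝ] E₂} {g1 : ℝ → E₁ → E₂ → E₁}
  {g2 : ℝ → E₁ → E₂ → E₂} {x0 : E₁} {γs γf β ε K : ℝ} {p q : ℝ → WithLp 1 (E₁ × E₂)}

theorem lyapunovPerronMap_congr (h : EqOn p q (Iic 0)) :
    EqOn (lyapunovPerronMap S F g1 g2 ε x0 p) (lyapunovPerronMap S F g1 g2 ε x0 q) (Iic 0) := by
  intro t (ht : t ≤ 0)
  simp only [lyapunovPerronMap, LPslow, LPfast]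
  congr 3
  · refine intervalIntegral.integral_congr fun s hs => ?_
    rw [h (uIcc_of_ge ht ▸ hs).2]
  · refine setIntegral_congr_fun measurableSet_Iic fun s hs => ?_
    rw [h (le_trans hs ht)]

theorem lyapunovPerronMap_eqOn_iff {x : ℝ → E₁} {y : ℝ → E₂} :
    EqOn (lyapunovPerronMap S F g1 g2 ε x0 fun t => WithLp.toLp 1 (x t, y t))
      (fun t => WithLp.toLp 1 (x t, y t)) (Iic 0) ↔
      ∀ t ≤ (0:ℝ), x t = LPslow S g1 x0 x y t ∧ y t = LPfast F g2 ε x y t := by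
  refine forall_congr' fun t => forall_congr' fun _ => ?_
  rw [lyapunovPerronMap, (WithLp.toLp_injective 1).eq_iff, Prod.mk.injEq, eq_comm,
    @eq_comm _ (y t)]
  rfl

variable [CompleteSpace E₁] [MeasurableSpace E₁] [BorelSpace E₁] [SecondCountableTopology E₁]
  [CompleteSpace E₂] [MeasurableSpace E₂] [BorelSpace E₂] [SecondCountableTopology E₂]

theorem memCneg_lyapunovPerronMap (hβs : β < γs) (hβf : γf < ε * β) (hε : 0 < ε) (hK : 0 ≤ K)
    (hS : ∀ t ≤ (0:ℝ), ∀ x : E₁, ‖NormedSpace.exp (t • S) x‖ ≤ Real.exp (γs * t) * ‖x‖)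
    (hF : ∀ t ≥ (0:ℝ), ∀ y : E₂, ‖NormedSpace.exp (t • F) y‖ ≤ Real.exp (γf * t) * ‖y‖)
    (hg1 : IsAdmissibleNonlinearity K β g1) (hg2 : IsAdmissibleNonlinearity K β g2)
    (hpc : Continuous p) (hp : MemCneg β p) :
    MemCneg β (lyapunovPerronMap S F g1 g2 ε x0 p) := by
  obtain ⟨D1, hD1⟩ := hg1.exists_norm_comp_le hK hp
  obtain ⟨D2, hD2⟩ := hg2.exists_norm_comp_le hK hp
  refine memCneg_of_norm_le (C := ‖x0‖ + D1 / (γs - β) + D2 / (ε * β - γf)) ?_ fun t ht => ?_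
  · refine (WithLp.prod_continuous_toLp 1 E₁ E₂).comp_continuousOn (ContinuousOn.prodMk ?_ ?_)
    · exact (continuous_exp_smul_add_integral S x0
        (hg1.intervalIntegrable_comp hK hpc)).continuousOn
    · exact (continuousOn_setIntegral_Iic_exp_div_smul hε hβf hF
        (hg2.stronglyMeasurable_comp hpc).aestronglyMeasurable hD2
        (hg2.intervalIntegrable_comp hK hpc)).const_smul _
  · rw [lyapunovPerronMap, WithLp.prod_norm_eq_of_L1, add_mul]
    exact add_le_add (norm_LPslow_le hβs hS hD1 ht) (norm_LPfast_le hε hβf hF hD2 ht)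

theorem norm_lyapunovPerronMap_sub_le (hβs : β < γs) (hβf : γf < ε * β) (hε : 0 < ε) (hK : 0 ≤ K)
    (hS : ∀ t ≤ (0:ℝ), ∀ x : E₁, ‖NormedSpace.exp (t • S) x‖ ≤ Real.exp (γs * t) * ‖x‖)
    (hF : ∀ t ≥ (0:ℝ), ∀ y : E₂, ‖NormedSpace.exp (t • F) y‖ ≤ Real.exp (γf * t) * ‖y‖)
    (hg1 : IsAdmissibleNonlinearity K β g1) (hg2 : IsAdmissibleNonlinearity K β g2)
    (hpc : Continuous p) (hqc : Continuous q) (hp : MemCneg β p) (hq : MemCneg β q) {C : ℝ}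
    (hpq : ∀ s ≤ (0:ℝ), ‖p s - q s‖ ≤ C * Real.exp (β * s)) {t : ℝ} (ht : t ≤ 0) :
    ‖lyapunovPerronMap S F g1 g2 ε x0 p t - lyapunovPerronMap S F g1 g2 ε x0 q t‖ ≤
      (K / (γs - β) + K / (ε * β - γf)) * C * Real.exp (β * t) := by
  obtain ⟨Dp, hDp⟩ := hg2.exists_norm_comp_le hK hp
  obtain ⟨Dq, hDq⟩ := hg2.exists_norm_comp_le hK hq
  rw [lyapunovPerronMap, lyapunovPerronMap, WithLp.prod_norm_eq_of_L1]
  calc _ ≤ K * C / (γs - β) * Real.exp (β * t) + K * C / (ε * β - γf) * Real.exp (β * t) :=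
        add_le_add
          (norm_LPslow_sub_le hβs hS (hg1.intervalIntegrable_comp hK hpc 0 t)
            (hg1.intervalIntegrable_comp hK hqc 0 t) (hg1.norm_comp_sub_le hK hpq) ht)
          (norm_LPfast_sub_le hε hβf hF
            (integrableOn_Iic_exp_div_smul hε hβf hF
              (hg2.stronglyMeasurable_comp hpc).aestronglyMeasurable hDp ht)
            (integrableOn_Iic_exp_div_smul hε hβf hF
              (hg2.stronglyMeasurable_comp hqc).aestronglyMeasurable hDq ht)
            (hg2.norm_comp_sub_le hK hpq) ht)
    _ = _ := by ring

end LyapunovPerronMap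

section Components

variable {X Y : Type*} [NormedAddCommGroup X] [NormedAddCommGroup Y] {β : ℝ}

theorem MemCneg.fst {p : ℝ → WithLp 1 (X × Y)} (hp : MemCneg β p) :
    MemCneg β fun t => (p t).fst := by
  obtain ⟨C, hC⟩ := hp.exists_norm_le
  exact memCneg_of_norm_le ((WithLp.continuous_fst 1 X Y).comp_continuousOn hp.1)
    fun t ht => (WithLp.norm_fst_le X _).trans (hC t ht)

theorem MemCneg.snd {p : ℝ → WithLp 1 (X × Y)} (hp : MemCneg β p) :
    MemCneg β fun t => (p t).snd := by
  obtain ⟨C, hC⟩ := hp.exists_norm_le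
  exact memCneg_of_norm_le ((WithLp.continuous_snd 1 X Y).comp_continuousOn hp.1)
    fun t ht => (WithLp.norm_snd_le X _).trans (hC t ht)

theorem MemCneg.toLp {x : ℝ → X} {y : ℝ → Y} (hx : MemCneg β x) (hy : MemCneg β y) :
    MemCneg β fun t => WithLp.toLp 1 (x t, y t) := by
  obtain ⟨C₁, hC₁⟩ := hx.exists_norm_le
  obtain ⟨C₂, hC₂⟩ := hy.exists_norm_le
  refine memCneg_of_norm_le (C := C₁ + C₂) ((WithLp.prod_continuous_toLp 1 X Y).comp_continuousOn
    (hx.1.prodMk hy.1)) fun t ht => ?_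
  rw [WithLp.prod_norm_eq_of_L1, add_mul]
  exact add_le_add (hC₁ t ht) (hC₂ t ht)

end Components

theorem contraction_constant_eq {γs γf γ K ε : ℝ} (hε : ε ≠ 0) :
    K / (γs - -γ / ε) + K / (ε * (-γ / ε) - γf) = ε * K / (γ + ε * γs) - K / (γ + γf) := by
  rw [mul_div_cancel₀ _ hε, show -γ - γf = -(γ + γf) by ring, div_neg,
    show γs - -γ / ε = (γ + ε * γs) / ε by field_simp; ring]
  field_simp
  ring

theorem lyapunovPerron_fixed_point_general
    {E₁ E₂ : Type*}
    [NormedAddCommGroup E₁] [NormedSpace ℝ E₁] [FiniteDimensional ℝ E₁] [MeasurableSpace E₁] [BorelSpace E₁]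
    [NormedAddCommGroup E₂] [NormedSpace ℝ E₂] [FiniteDimensional ℝ E₂] [MeasurableSpace E₂] [BorelSpace E₂]
    (S : E₁ →L[ℝ] E₁) (F : E₂ →L[ℝ] E₂)
    (γs γf γ K ε : ℝ)
    (hγs : 0 < γs) (hγ : 0 < γ) (hK : 0 < K)
    (hgap : K < -(γ + γf)) (hε : 0 < ε)
    (hS : ∀ t ≤ (0:ℝ), ∀ x : E₁, ‖NormedSpace.exp (t • S) x‖ ≤ Real.exp (γs * t) * ‖x‖)
    (hF : ∀ t ≥ (0:ℝ), ∀ y : E₂, ‖NormedSpace.exp (t • F) y‖ ≤ Real.exp (γf * t) * ‖y‖)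
    (g1 : ℝ → E₁ → E₂ → E₁) (g2 : ℝ → E₁ → E₂ → E₂)
    (hg1m : ∀ x y, Measurable fun t => g1 t x y)
    (hg2m : ∀ x y, Measurable fun t => g2 t x y)
    (hg1b : ∀ x y r, ∃ M, ∀ t : ℝ, |t| ≤ r → ‖g1 t x y‖ ≤ M)
    (hg2b : ∀ x y r, ∃ M, ∀ t : ℝ, |t| ≤ r → ‖g2 t x y‖ ≤ M)
    (hg1l : ∀ t x₁ y₁ x₂ y₂, ‖g1 t x₁ y₁ - g1 t x₂ y₂‖ ≤ K * (‖x₁ - x₂‖ + ‖y₁ - y₂‖))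
    (hg2l : ∀ t x₁ y₁ x₂ y₂, ‖g2 t x₁ y₁ - g2 t x₂ y₂‖ ≤ K * (‖x₁ - x₂‖ + ‖y₁ - y₂‖))
    (hg0 : ∃ M, ∀ t ≤ (0:ℝ),
      Real.exp ((γ/ε) * t) * (‖g1 t 0 0‖ + ‖g2 t 0 0‖) ≤ M)
    (hρ : (ε * K / (γ + ε * γs) - K / (γ + γf)) < 1) :
    ∀ x0 : E₁, ∃ (xh : ℝ → E₁) (yh : ℝ → E₂),
      (MemCneg (-γ/ε) xh ∧ MemCneg (-γ/ε) yh) ∧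
      (∀ t ≤ (0:ℝ), xh t = LPslow S g1 x0 xh yh t ∧ yh t = LPfast F g2 ε xh yh t) ∧
      xh 0 = x0 ∧
      (∀ (xh' : ℝ → E₁) (yh' : ℝ → E₂),
        (MemCneg (-γ/ε) xh' ∧ MemCneg (-γ/ε) yh') →
        (∀ t ≤ (0:ℝ), xh' t = LPslow S g1 x0 xh' yh' t ∧ yh' t = LPfast F g2 ε xh' yh' t) →
        ∀ t ≤ (0:ℝ), xh' t = xh t ∧ yh' t = yh t) := by
  intro x0
  set β := -γ / ε
  have hβs : β < γs := (div_neg_of_neg_of_pos (neg_neg_of_pos hγ) hε).trans hγs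
  have hβf : γf < ε * β := by rw [mul_div_cancel₀ _ hε.ne']; linarith
  have hρ0 : 0 ≤ K / (γs - β) + K / (ε * β - γf) :=
    add_nonneg (div_nonneg hK.le (by linarith)) (div_nonneg hK.le (by linarith))
  obtain ⟨M, hM⟩ := hg0
  have hM' : ∀ t ≤ (0:ℝ), ‖g1 t 0 0‖ + ‖g2 t 0 0‖ ≤ M * Real.exp (β * t) := fun t ht =>
    exp_neg_mul_mul_le_iff.1 (by simpa [β, neg_div] using hM t ht)
  have hg1 : IsAdmissibleNonlinearity K β g1 := ⟨hg1m, hg1b, hg1l, M, fun t ht =>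
    (le_add_of_nonneg_right (norm_nonneg _)).trans (hM' t ht)⟩
  have hg2 : IsAdmissibleNonlinearity K β g2 := ⟨hg2m, hg2b, hg2l, M, fun t ht =>
    (le_add_of_nonneg_left (norm_nonneg _)).trans (hM' t ht)⟩
  obtain ⟨p, hp, hfix, huniq⟩ := exists_unique_fixedPoint_memCneg hρ0
    (contraction_constant_eq hε.ne' ▸ hρ) (lyapunovPerronMap S F g1 g2 ε x0)
    (fun _ _ => lyapunovPerronMap_congr)
    (fun _ => memCneg_lyapunovPerronMap hβs hβf hε hK.le hS hF hg1 hg2)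
    (fun _ _ hpc hqc hp hq _ hpq _ => norm_lyapunovPerronMap_sub_le hβs hβf hε hK.le hS hF hg1 hg2
      hpc hqc hp hq hpq)
  have hsol := lyapunovPerronMap_eqOn_iff.1 hfix
  refine ⟨fun t => (p t).fst, fun t => (p t).snd, ⟨hp.fst, hp.snd⟩, hsol,
    (hsol 0 le_rfl).1.trans LPslow_zero, fun xh' yh' ⟨hx', hy'⟩ hsol' t ht => ?_⟩
  have hq := huniq _ (hx'.toLp hy') (lyapunovPerronMap_eqOn_iff.2 hsol') ht
  exact ⟨congrArg WithLp.fst hq, congrArg WithLp.snd hq⟩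

/-- If `ρ(ε) < 1` then the Lyapunov–Perron operator has a unique fixed
point in `C_β^-`, i.e. the Lyapunov–Perron integral system has exactly one solution in
`C_β^-`, and this solution satisfies `x̂(0) = x₀`. -/
theorem lyapunovPerron_fixed_point
    {E₁ E₂ : Type*}
    [NormedAddCommGroup E₁] [NormedSpace ℝ E₁] [FiniteDimensional ℝ E₁] [MeasurableSpace E₁] [BorelSpace E₁]
    [NormedAddCommGroup E₂] [NormedSpace ℝ E₂] [FiniteDimensional ℝ E₂] [MeasurableSpace E₂] [BorelSpace E₂]
    (S : E₁ →L[ℝ] E₁) (F : E₂ →L[ℝ] E₂)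
    (γs γf γ K ε : ℝ)
    (hγs : 0 < γs) (hγf : γf < 0) (hγ : 0 < γ) (hK : 0 < K)
    (hgap : K < -(γ + γf)) (hε : 0 < ε)
    (hS : ∀ t ≤ (0:ℝ), ∀ x : E₁, ‖NormedSpace.exp (t • S) x‖ ≤ Real.exp (γs * t) * ‖x‖)
    (hF : ∀ t ≥ (0:ℝ), ∀ y : E₂, ‖NormedSpace.exp (t • F) y‖ ≤ Real.exp (γf * t) * ‖y‖)
    (g1 : ℝ → E₁ → E₂ → E₁) (g2 : ℝ → E₁ → E₂ → E₂)
    (hg1m : ∀ x y, Measurable fun t => g1 t x y)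
    (hg2m : ∀ x y, Measurable fun t => g2 t x y)
    (hg1b : ∀ x y r, ∃ M, ∀ t : ℝ, |t| ≤ r → ‖g1 t x y‖ ≤ M)
    (hg2b : ∀ x y r, ∃ M, ∀ t : ℝ, |t| ≤ r → ‖g2 t x y‖ ≤ M)
    (hg1l : ∀ t x₁ y₁ x₂ y₂, ‖g1 t x₁ y₁ - g1 t x₂ y₂‖ ≤ K * (‖x₁ - x₂‖ + ‖y₁ - y₂‖))
    (hg2l : ∀ t x₁ y₁ x₂ y₂, ‖g2 t x₁ y₁ - g2 t x₂ y₂‖ ≤ K * (‖x₁ - x₂‖ + ‖y₁ - y₂‖))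
    (hg0 : ∃ M, ∀ t ≤ (0:ℝ),
      Real.exp ((γ/ε) * t) * (‖g1 t 0 0‖ + ‖g2 t 0 0‖) ≤ M)
    (hρ : (ε * K / (γ + ε * γs) - K / (γ + γf)) < 1) :
    ∀ x0 : E₁, ∃ (xh : ℝ → E₁) (yh : ℝ → E₂),
      (MemCneg (-γ/ε) xh ∧ MemCneg (-γ/ε) yh) ∧
      (∀ t ≤ (0:ℝ), xh t = LPslow S g1 x0 xh yh t ∧ yh t = LPfast F g2 ε xh yh t) ∧
      xh 0 = x0 ∧
      (∀ (xh' : ℝ → E₁) (yh' : ℝ → E₂),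
        (MemCneg (-γ/ε) xh' ∧ MemCneg (-γ/ε) yh') →
        (∀ t ≤ (0:ℝ), xh' t = LPslow S g1 x0 xh' yh' t ∧ yh' t = LPfast F g2 ε xh' yh' t) →
        ∀ t ≤ (0:ℝ), xh' t = xh t ∧ yh' t = yh t) :=
  lyapunovPerron_fixed_point_general S F γs γf γ K ε hγs hγ hK hgap hε hS hF g1 g2 hg1m hg2m hg1b
    hg2b hg1l hg2l hg0 hρ
end
end

section
/- Assume ρ(ε) < 1. For x₀ ∈ E₁ let φ^ε(·, x₀) = (x̂^ε(·, x₀), ŷ^ε(·, x₀)) denote the unique fixed point of I^ε_{x₀} in C_β^−(E₁ × E₂). Then for all x₀, x₀' ∈ E₁, ‖φ^ε(·, x₀) − φ^ε(·, x₀')‖_{C_β^−} ≤ ‖x₀ − x₀'‖ / (1 − ρ(ε)). -/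
open MeasureTheory Real Filter

noncomputable section

variable {E₁ E₂ : Type*}
  [NormedAddCommGroup E₁] [NormedSpace ℝ E₁]
  [NormedAddCommGroup E₂] [NormedSpace ℝ E₂]

/-!
Subtract the two fixed-point equations. By the Lipschitz bound, the nonlinear terms of the two
solutions differ at time `s ≤ 0` by at most `K N e^{βs}`, where `N` is the `C_β^-`-distance of the
solutions. Integrating this against `‖e^{τS}‖ ≤ e^{γ_s τ}` over `(t, 0]` and against
`‖e^{τF/ε}‖ ≤ e^{γ_f τ/ε}` over `(-∞, t]` bounds the weighted slow difference by
`‖x₀ - x₀'‖ + εK/(γ + εγ_s) · N` and the weighted fast one by `-K/(γ + γ_f) · N`, so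
`N ≤ ‖x₀ - x₀'‖ + ρ(ε) N`. The integrals exist because along elements of `C_β^-` the nonlinear
terms grow at most like `e^{βs}`, and `γ + γ_f < 0` makes the fast integral converge at `-∞`.
-/

open Set

theorem exp_mul_sub_eq_mul_exp (a t s : ℝ) : exp (a * (t - s)) = exp (a * t) * exp (-a * s) := by
  rw [← Real.exp_add]; ring_nf

theorem integrableOn_exp_mul_sub_Iic {a : ℝ} (ha : a < 0) (t : ℝ) :
    IntegrableOn (fun s => exp (a * (t - s))) (Iic t) := by
  simp only [exp_mul_sub_eq_mul_exp]
  exact (integrableOn_exp_mul_Iic (neg_pos.2 ha) t).const_mul _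

theorem integral_exp_mul_sub_Iic {a : ℝ} (ha : a < 0) (t : ℝ) :
    ∫ s in Iic t, exp (a * (t - s)) = -a⁻¹ := by
  simp only [exp_mul_sub_eq_mul_exp, integral_const_mul, integral_exp_mul_Iic (neg_pos.2 ha)]
  rw [mul_div_assoc', ← Real.exp_add]
  simp [div_neg]

theorem integrableOn_exp_mul_sub_Ioi {a : ℝ} (ha : 0 < a) (t : ℝ) :
    IntegrableOn (fun s => exp (a * (t - s))) (Ioi t) := by
  simp only [exp_mul_sub_eq_mul_exp]
  exact (integrableOn_exp_mul_Ioi (neg_neg_of_pos ha) t).const_mul _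

theorem integral_exp_mul_sub_Ioi {a : ℝ} (ha : 0 < a) (t : ℝ) :
    ∫ s in Ioi t, exp (a * (t - s)) = a⁻¹ := by
  simp only [exp_mul_sub_eq_mul_exp, integral_const_mul, integral_exp_mul_Ioi (neg_neg_of_pos ha)]
  rw [neg_div_neg_eq, mul_div_assoc', ← Real.exp_add]
  simp

theorem setIntegral_exp_mul_sub_Ioc_le {a : ℝ} (ha : 0 < a) (t u : ℝ) :
    ∫ s in Ioc t u, exp (a * (t - s)) ≤ a⁻¹ := by
  rw [← integral_exp_mul_sub_Ioi ha t]
  exact setIntegral_mono_set (integrableOn_exp_mul_sub_Ioi ha t)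
    (.of_forall fun _ => (exp_pos _).le) Ioc_subset_Ioi_self.eventuallyLE

theorem continuous_exp_smul_comp {E : Type*} [NormedAddCommGroup E] [NormedSpace ℝ E]
    [CompleteSpace E] (A : E →L[ℝ] E) {f : ℝ → ℝ} (hf : Continuous f) :
    Continuous fun s => NormedSpace.exp (f s • A) :=
  (continuous_iff_continuousAt.2 fun B => (NormedSpace.exp_analytic (𝕂 := ℝ) B).continuousAt).comp
    (hf.smul continuous_const)

section Kernel

variable {G H : Type*} [NormedAddCommGroup G] [NormedSpace ℝ G] [NormedAddCommGroup H]
  [NormedSpace ℝ H] {T : ℝ → G →L[ℝ] H} {h : ℝ → G} {A : Set ℝ} {μ β C t : ℝ}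

theorem norm_apply_le_of_growth (hT : ∀ s ∈ A, ∀ v, ‖T s v‖ ≤ exp (μ * (t - s)) * ‖v‖)
    (hh : ∀ s ∈ A, ‖h s‖ ≤ C * exp (β * s)) :
    ∀ s ∈ A, ‖T s (h s)‖ ≤ C * exp (β * t) * exp ((μ - β) * (t - s)) := by
  intro s hs
  calc ‖T s (h s)‖ ≤ exp (μ * (t - s)) * (C * exp (β * s)) :=
        (hT s hs _).trans (mul_le_mul_of_nonneg_left (hh s hs) (exp_pos _).le)
    _ = C * exp (β * t) * exp ((μ - β) * (t - s)) := by
        rw [mul_left_comm, mul_assoc, ← Real.exp_add, ← Real.exp_add]; ring_nf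

theorem integrableOn_apply_of_growth (hA : MeasurableSet A)
    (hTm : AEStronglyMeasurable T (volume.restrict A))
    (hhm : AEStronglyMeasurable h (volume.restrict A))
    (hT : ∀ s ∈ A, ∀ v, ‖T s v‖ ≤ exp (μ * (t - s)) * ‖v‖)
    (hh : ∀ s ∈ A, ‖h s‖ ≤ C * exp (β * s))
    (hint : IntegrableOn (fun s => exp ((μ - β) * (t - s))) A) :
    IntegrableOn (fun s => T s (h s)) A :=
  (hint.const_mul _).mono' ((ContinuousLinearMap.apply ℝ H).aestronglyMeasurable_comp₂ hhm hTm)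
    (ae_restrict_of_forall_mem hA (norm_apply_le_of_growth hT hh))

theorem norm_setIntegral_apply_le_of_growth (hA : MeasurableSet A)
    (hT : ∀ s ∈ A, ∀ v, ‖T s v‖ ≤ exp (μ * (t - s)) * ‖v‖)
    (hh : ∀ s ∈ A, ‖h s‖ ≤ C * exp (β * s))
    (hint : IntegrableOn (fun s => exp ((μ - β) * (t - s))) A) :
    ‖∫ s in A, T s (h s)‖ ≤ C * exp (β * t) * ∫ s in A, exp ((μ - β) * (t - s)) := by
  rw [← integral_const_mul]
  exact norm_integral_le_of_norm_le (hint.const_mul _)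
    (ae_restrict_of_forall_mem hA (norm_apply_le_of_growth hT hh))

end Kernel

section Caratheodory

variable {X Y G : Type*}
  [TopologicalSpace X] [TopologicalSpace.MetrizableSpace X] [SecondCountableTopology X]
  [MeasurableSpace X] [BorelSpace X]
  [TopologicalSpace Y] [TopologicalSpace.MetrizableSpace Y] [SecondCountableTopology Y]
  [MeasurableSpace Y] [BorelSpace Y]
  [TopologicalSpace G] [TopologicalSpace.PseudoMetrizableSpace G] [SecondCountableTopology G]
  [MeasurableSpace G] [BorelSpace G]

theorem aestronglyMeasurable_comp_of_continuousOn {g : ℝ → X → Y → G}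
    (hgm : ∀ x y, Measurable fun s => g s x y)
    (hgc : ∀ s, Continuous fun p : X × Y => g s p.1 p.2)
    {x : ℝ → X} {y : ℝ → Y} {A : Set ℝ} (hA : MeasurableSet A)
    (hx : ContinuousOn x A) (hy : ContinuousOn y A) :
    AEStronglyMeasurable (fun s => g s (x s) (y s)) (volume.restrict A) := by
  have hu : Measurable (Function.uncurry fun (p : X × Y) s => g s p.1 p.2) :=
    measurable_uncurry_of_continuous_of_measurable hgc fun p => hgm p.1 p.2
  exact (hu.comp_aemeasurable (((hx.aemeasurable hA).prodMk (hy.aemeasurable hA)).prodMk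
    aemeasurable_id)).aestronglyMeasurable

end Caratheodory

theorem continuous_uncurry_of_norm_sub_le {X Y G : Type*} [NormedAddCommGroup X]
    [NormedAddCommGroup Y] [NormedAddCommGroup G] {g : X → Y → G} {K : ℝ}
    (hg : ∀ x₁ y₁ x₂ y₂, ‖g x₁ y₁ - g x₂ y₂‖ ≤ K * (‖x₁ - x₂‖ + ‖y₁ - y₂‖)) :
    Continuous fun p : X × Y => g p.1 p.2 := by
  refine (LipschitzWith.of_dist_le' (K := 2 * |K|) fun p q => ?_).continuous
  rw [dist_eq_norm, dist_eq_norm]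
  calc ‖g p.1 p.2 - g q.1 q.2‖ ≤ K * (‖p.1 - q.1‖ + ‖p.2 - q.2‖) := hg _ _ _ _
    _ ≤ |K| * (‖p - q‖ + ‖p - q‖) := by
        gcongr
        · exact le_abs_self K
        exacts [norm_fst_le (p - q), norm_snd_le (p - q)]
    _ = 2 * |K| * ‖p - q‖ := by ring

theorem le_mul_exp_of_exp_neg_mul_le {β t a C : ℝ} (h : exp (-β * t) * a ≤ C) :
    a ≤ C * exp (β * t) := by
  rwa [neg_mul, Real.exp_neg, inv_mul_le_iff₀ (exp_pos _), mul_comm] at h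

section WeightedNorm

variable {E : Type*} [NormedAddCommGroup E] {β : ℝ} {φ ψ : ℝ → E}

theorem negNorm_le {C : ℝ} (h : ∀ t ≤ 0, exp (-β * t) * ‖φ t‖ ≤ C) : negNorm β φ ≤ C :=
  have : Nonempty (Iic (0 : ℝ)) := ⟨⟨0, self_mem_Iic⟩⟩
  ciSup_le fun t => h t.1 t.2

theorem MemCneg.exp_mul_norm_le (hφ : MemCneg β φ) {t : ℝ} (ht : t ≤ 0) :
    exp (-β * t) * ‖φ t‖ ≤ negNorm β φ :=
  le_ciSup hφ.2 (⟨t, ht⟩ : Iic (0 : ℝ))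

theorem MemCneg.norm_le (hφ : MemCneg β φ) {t : ℝ} (ht : t ≤ 0) :
    ‖φ t‖ ≤ negNorm β φ * exp (β * t) :=
  le_mul_exp_of_exp_neg_mul_le (hφ.exp_mul_norm_le ht)

theorem MemCneg.sub (hφ : MemCneg β φ) (hψ : MemCneg β ψ) : MemCneg β fun t => φ t - ψ t := by
  refine ⟨hφ.1.sub hψ.1, negNorm β φ + negNorm β ψ, ?_⟩
  rintro _ ⟨⟨t, ht⟩, rfl⟩
  calc exp (-β * t) * ‖φ t - ψ t‖ ≤ exp (-β * t) * ‖φ t‖ + exp (-β * t) * ‖ψ t‖ := by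
        rw [← mul_add]; gcongr; exact norm_sub_le _ _
    _ ≤ negNorm β φ + negNorm β ψ := add_le_add (hφ.exp_mul_norm_le ht) (hψ.exp_mul_norm_le ht)

end WeightedNorm

section Nonlinearity

variable {X Y G : Type*} [NormedAddCommGroup X] [NormedAddCommGroup Y] [NormedAddCommGroup G]
  {g : ℝ → X → Y → G} {K β N : ℝ} {x x' : ℝ → X} {y y' : ℝ → Y}

theorem norm_comp_sub_comp_le
    (hgl : ∀ s x₁ y₁ x₂ y₂, ‖g s x₁ y₁ - g s x₂ y₂‖ ≤ K * (‖x₁ - x₂‖ + ‖y₁ - y₂‖)) (hK : 0 ≤ K)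
    (hxy : ∀ s ≤ 0, ‖x s - x' s‖ + ‖y s - y' s‖ ≤ N * exp (β * s)) :
    ∀ s ≤ 0, ‖g s (x s) (y s) - g s (x' s) (y' s)‖ ≤ K * N * exp (β * s) := fun s hs =>
  calc _ ≤ K * (‖x s - x' s‖ + ‖y s - y' s‖) := hgl _ _ _ _ _
    _ ≤ K * N * exp (β * s) := by rw [mul_assoc]; exact mul_le_mul_of_nonneg_left (hxy s hs) hK

theorem MemCneg.norm_comp_le
    (hgl : ∀ s x₁ y₁ x₂ y₂, ‖g s x₁ y₁ - g s x₂ y₂‖ ≤ K * (‖x₁ - x₂‖ + ‖y₁ - y₂‖)) (hK : 0 ≤ K)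
    {M : ℝ} (hg0 : ∀ s ≤ 0, ‖g s 0 0‖ ≤ M * exp (β * s)) (hx : MemCneg β x) (hy : MemCneg β y) :
    ∀ s ≤ 0, ‖g s (x s) (y s)‖ ≤ (M + K * (negNorm β x + negNorm β y)) * exp (β * s) := by
  intro s hs
  have hxy : ∀ s ≤ 0, ‖x s - 0‖ + ‖y s - 0‖ ≤ (negNorm β x + negNorm β y) * exp (β * s) :=
    fun s hs => by
      rw [sub_zero, sub_zero, add_mul]; exact add_le_add (hx.norm_le hs) (hy.norm_le hs)
  calc ‖g s (x s) (y s)‖ ≤ ‖g s 0 0‖ + ‖g s (x s) (y s) - g s 0 0‖ :=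
        norm_le_norm_add_norm_sub' _ _
    _ ≤ M * exp (β * s) + K * (negNorm β x + negNorm β y) * exp (β * s) :=
        add_le_add (hg0 s hs) (norm_comp_sub_comp_le (x' := 0) (y' := 0) hgl hK hxy s hs)
    _ = _ := by ring

end Nonlinearity

section SlowComponent

variable {Y : Type*} {S : E₁ →L[ℝ] E₁} {g : ℝ → E₁ → Y → E₁} {γs β K : ℝ}
  {x x' : ℝ → E₁} {y y' : ℝ → Y} {t : ℝ}

theorem norm_exp_smul_sub_apply_le (hS : ∀ τ ≤ (0 : ℝ), ∀ v : E₁,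
      ‖NormedSpace.exp (τ • S) v‖ ≤ exp (γs * τ) * ‖v‖) :
    ∀ s ∈ Ioc t 0, ∀ v : E₁,
      ‖NormedSpace.exp ((t - s) • S) v‖ ≤ exp (γs * (t - s)) * ‖v‖ :=
  fun _ hs => hS _ (by linarith [hs.1])

theorem integrableOn_LPslow_integrand [CompleteSpace E₁] [SecondCountableTopology E₁]
    [MeasurableSpace E₁] [BorelSpace E₁] [NormedAddCommGroup Y] [SecondCountableTopology Y]
    [MeasurableSpace Y] [BorelSpace Y]
    (hS : ∀ τ ≤ (0 : ℝ), ∀ v : E₁, ‖NormedSpace.exp (τ • S) v‖ ≤ exp (γs * τ) * ‖v‖)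
    (hgm : ∀ x y, Measurable fun s => g s x y)
    (hgl : ∀ s x₁ y₁ x₂ y₂, ‖g s x₁ y₁ - g s x₂ y₂‖ ≤ K * (‖x₁ - x₂‖ + ‖y₁ - y₂‖)) (hK : 0 ≤ K)
    {M : ℝ} (hg0 : ∀ s ≤ 0, ‖g s 0 0‖ ≤ M * exp (β * s)) (hx : MemCneg β x) (hy : MemCneg β y) :
    IntegrableOn (fun s => NormedSpace.exp ((t - s) • S) (g s (x s) (y s))) (Ioc t 0) :=
  integrableOn_apply_of_growth measurableSet_Ioc
    (continuous_exp_smul_comp S (by fun_prop)).aestronglyMeasurable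
    (aestronglyMeasurable_comp_of_continuousOn hgm
      (fun s => continuous_uncurry_of_norm_sub_le (hgl s)) measurableSet_Ioc
      (hx.1.mono Ioc_subset_Iic_self) (hy.1.mono Ioc_subset_Iic_self))
    (norm_exp_smul_sub_apply_le hS) (fun s hs => hx.norm_comp_le hgl hK hg0 hy s hs.2)
    (by fun_prop : Continuous fun s => exp ((γs - β) * (t - s))).integrableOn_Ioc

theorem LPslow_sub_LPslow (x0 x0' : E₁) (ht : t ≤ 0)
    (hint : IntegrableOn (fun s => NormedSpace.exp ((t - s) • S) (g s (x s) (y s))) (Ioc t 0))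
    (hint' : IntegrableOn (fun s => NormedSpace.exp ((t - s) • S) (g s (x' s) (y' s))) (Ioc t 0)) :
    LPslow S g x0 x y t - LPslow S g x0' x' y' t =
      NormedSpace.exp (t • S) (x0 - x0') -
        ∫ s in Ioc t 0, NormedSpace.exp ((t - s) • S) (g s (x s) (y s) - g s (x' s) (y' s)) := by
  simp only [LPslow, intervalIntegral.integral_of_ge ht, map_sub, integral_sub hint hint']
  abel

theorem exp_neg_mul_norm_LPslow_sub_LPslow_le [NormedAddCommGroup Y]
    (hS : ∀ τ ≤ (0 : ℝ), ∀ v : E₁, ‖NormedSpace.exp (τ • S) v‖ ≤ exp (γs * τ) * ‖v‖)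
    (hβ : β < γs)
    (hgl : ∀ s x₁ y₁ x₂ y₂, ‖g s x₁ y₁ - g s x₂ y₂‖ ≤ K * (‖x₁ - x₂‖ + ‖y₁ - y₂‖)) (hK : 0 ≤ K)
    {N : ℝ} (hxy : ∀ s ≤ 0, ‖x s - x' s‖ + ‖y s - y' s‖ ≤ N * exp (β * s))
    (x0 x0' : E₁) (ht : t ≤ 0)
    (hint : IntegrableOn (fun s => NormedSpace.exp ((t - s) • S) (g s (x s) (y s))) (Ioc t 0))
    (hint' : IntegrableOn (fun s => NormedSpace.exp ((t - s) • S) (g s (x' s) (y' s))) (Ioc t 0)) :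
    exp (-β * t) * ‖LPslow S g x0 x y t - LPslow S g x0' x' y' t‖ ≤
      ‖x0 - x0'‖ + K / (γs - β) * N := by
  have hc : 0 < γs - β := sub_pos.2 hβ
  have hN : 0 ≤ N := by
    simpa using (add_nonneg (norm_nonneg _) (norm_nonneg _)).trans (hxy 0 le_rfl)
  have hintegral : ‖∫ s in Ioc t 0,
        NormedSpace.exp ((t - s) • S) (g s (x s) (y s) - g s (x' s) (y' s))‖ ≤
      K * N * exp (β * t) * (γs - β)⁻¹ :=
    (norm_setIntegral_apply_le_of_growth measurableSet_Ioc (norm_exp_smul_sub_apply_le hS)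
      (fun s hs => norm_comp_sub_comp_le hgl hK hxy s hs.2)
      (by fun_prop : Continuous fun s => exp ((γs - β) * (t - s))).integrableOn_Ioc).trans
    (by gcongr; exact setIntegral_exp_mul_sub_Ioc_le hc t 0)
  have hdecay : exp (-β * t) * exp (γs * t) ≤ 1 := by
    rw [← Real.exp_add, exp_le_one_iff]; nlinarith
  have hcancel : exp (-β * t) * exp (β * t) = 1 := by rw [← Real.exp_add]; simp
  rw [LPslow_sub_LPslow x0 x0' ht hint hint']
  calc _ ≤ exp (-β * t) * (exp (γs * t) * ‖x0 - x0'‖ + K * N * exp (β * t) * (γs - β)⁻¹) := by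
        gcongr; exact (norm_sub_le _ _).trans (add_le_add (hS t ht _) hintegral)
    _ = exp (-β * t) * exp (γs * t) * ‖x0 - x0'‖ +
          exp (-β * t) * exp (β * t) * (K / (γs - β) * N) := by ring
    _ ≤ ‖x0 - x0'‖ + K / (γs - β) * N := by
        rw [hcancel, one_mul]; gcongr; exact mul_le_of_le_one_left (norm_nonneg _) hdecay

theorem negNorm_sub_le_of_eq_LPslow [CompleteSpace E₁] [SecondCountableTopology E₁]
    [MeasurableSpace E₁] [BorelSpace E₁] [NormedAddCommGroup Y] [SecondCountableTopology Y]
    [MeasurableSpace Y] [BorelSpace Y]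
    (hS : ∀ τ ≤ (0 : ℝ), ∀ v : E₁, ‖NormedSpace.exp (τ • S) v‖ ≤ exp (γs * τ) * ‖v‖)
    (hβ : β < γs) (hgm : ∀ x y, Measurable fun s => g s x y)
    (hgl : ∀ s x₁ y₁ x₂ y₂, ‖g s x₁ y₁ - g s x₂ y₂‖ ≤ K * (‖x₁ - x₂‖ + ‖y₁ - y₂‖)) (hK : 0 ≤ K)
    {M : ℝ} (hg0 : ∀ s ≤ 0, ‖g s 0 0‖ ≤ M * exp (β * s))
    (hx : MemCneg β x) (hy : MemCneg β y) (hx' : MemCneg β x') (hy' : MemCneg β y')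
    {x0 x0' : E₁} (hfix : ∀ t ≤ 0, x t = LPslow S g x0 x y t)
    (hfix' : ∀ t ≤ 0, x' t = LPslow S g x0' x' y' t)
    {N : ℝ} (hxy : ∀ s ≤ 0, ‖x s - x' s‖ + ‖y s - y' s‖ ≤ N * exp (β * s)) :
    negNorm β (fun t => x t - x' t) ≤ ‖x0 - x0'‖ + K / (γs - β) * N :=
  negNorm_le fun t ht => by
    rw [hfix t ht, hfix' t ht]
    exact exp_neg_mul_norm_LPslow_sub_LPslow_le hS hβ hgl hK hxy x0 x0' ht
      (integrableOn_LPslow_integrand hS hgm hgl hK hg0 hx hy)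
      (integrableOn_LPslow_integrand hS hgm hgl hK hg0 hx' hy')

end SlowComponent

section FastComponent

variable {X : Type*} {F : E₂ →L[ℝ] E₂} {g : ℝ → X → E₂ → E₂} {γf β K ε : ℝ}
  {x x' : ℝ → X} {y y' : ℝ → E₂} {t : ℝ}

theorem norm_exp_div_smul_apply_le_s4 (hε : 0 < ε) (hF : ∀ τ ≥ (0 : ℝ), ∀ v : E₂,
      ‖NormedSpace.exp (τ • F) v‖ ≤ exp (γf * τ) * ‖v‖) :
    ∀ s ∈ Iic t, ∀ v : E₂,
      ‖NormedSpace.exp (((t - s) / ε) • F) v‖ ≤ exp (γf / ε * (t - s)) * ‖v‖ := by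
  intro s hs v
  rw [div_mul_eq_mul_div, mul_div_assoc]
  exact hF _ (div_nonneg (sub_nonneg.2 hs) hε.le) v

theorem integrableOn_exp_div_mul_sub_Iic (hε : 0 < ε) (hβ : γf < ε * β) :
    IntegrableOn (fun s => exp ((γf / ε - β) * (t - s))) (Iic t) :=
  integrableOn_exp_mul_sub_Iic (by rw [sub_neg, div_lt_iff₀' hε]; exact hβ) t

theorem integrableOn_LPfast_integrand [NormedAddCommGroup X] [SecondCountableTopology X]
    [MeasurableSpace X] [BorelSpace X] [CompleteSpace E₂] [SecondCountableTopology E₂]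
    [MeasurableSpace E₂] [BorelSpace E₂] (hε : 0 < ε) (hβ : γf < ε * β)
    (hF : ∀ τ ≥ (0 : ℝ), ∀ v : E₂, ‖NormedSpace.exp (τ • F) v‖ ≤ exp (γf * τ) * ‖v‖)
    (hgm : ∀ x y, Measurable fun s => g s x y)
    (hgl : ∀ s x₁ y₁ x₂ y₂, ‖g s x₁ y₁ - g s x₂ y₂‖ ≤ K * (‖x₁ - x₂‖ + ‖y₁ - y₂‖)) (hK : 0 ≤ K)
    {M : ℝ} (hg0 : ∀ s ≤ 0, ‖g s 0 0‖ ≤ M * exp (β * s)) (hx : MemCneg β x) (hy : MemCneg β y)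
    (ht : t ≤ 0) :
    IntegrableOn (fun s => NormedSpace.exp (((t - s) / ε) • F) (g s (x s) (y s))) (Iic t) :=
  integrableOn_apply_of_growth measurableSet_Iic
    (continuous_exp_smul_comp F (by fun_prop)).aestronglyMeasurable
    (aestronglyMeasurable_comp_of_continuousOn hgm
      (fun s => continuous_uncurry_of_norm_sub_le (hgl s)) measurableSet_Iic
      (hx.1.mono (Iic_subset_Iic.2 ht)) (hy.1.mono (Iic_subset_Iic.2 ht)))
    (norm_exp_div_smul_apply_le_s4 hε hF) (fun s hs => hx.norm_comp_le hgl hK hg0 hy s (hs.trans ht))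
    (integrableOn_exp_div_mul_sub_Iic hε hβ)

theorem LPfast_sub_LPfast
    (hint : IntegrableOn (fun s => NormedSpace.exp (((t - s) / ε) • F) (g s (x s) (y s))) (Iic t))
    (hint' : IntegrableOn (fun s => NormedSpace.exp (((t - s) / ε) • F) (g s (x' s) (y' s)))
      (Iic t)) :
    LPfast F g ε x y t - LPfast F g ε x' y' t =
      (1 / ε) • ∫ s in Iic t,
        NormedSpace.exp (((t - s) / ε) • F) (g s (x s) (y s) - g s (x' s) (y' s)) := by
  simp only [LPfast, map_sub, integral_sub hint hint', smul_sub]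

theorem exp_neg_mul_norm_LPfast_sub_LPfast_le [NormedAddCommGroup X]
    (hF : ∀ τ ≥ (0 : ℝ), ∀ v : E₂, ‖NormedSpace.exp (τ • F) v‖ ≤ exp (γf * τ) * ‖v‖)
    (hε : 0 < ε) (hβ : γf < ε * β)
    (hgl : ∀ s x₁ y₁ x₂ y₂, ‖g s x₁ y₁ - g s x₂ y₂‖ ≤ K * (‖x₁ - x₂‖ + ‖y₁ - y₂‖)) (hK : 0 ≤ K)
    {N : ℝ} (hxy : ∀ s ≤ 0, ‖x s - x' s‖ + ‖y s - y' s‖ ≤ N * exp (β * s)) (ht : t ≤ 0)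
    (hint : IntegrableOn (fun s => NormedSpace.exp (((t - s) / ε) • F) (g s (x s) (y s))) (Iic t))
    (hint' : IntegrableOn (fun s => NormedSpace.exp (((t - s) / ε) • F) (g s (x' s) (y' s)))
      (Iic t)) :
    exp (-β * t) * ‖LPfast F g ε x y t - LPfast F g ε x' y' t‖ ≤ K / (ε * β - γf) * N := by
  have hintegral := norm_setIntegral_apply_le_of_growth measurableSet_Iic
    (norm_exp_div_smul_apply_le_s4 hε hF)
    (fun s hs => norm_comp_sub_comp_le hgl hK hxy s (hs.trans ht))
    (integrableOn_exp_div_mul_sub_Iic hε hβ)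
  rw [integral_exp_mul_sub_Iic (by rw [sub_neg, div_lt_iff₀' hε]; exact hβ)] at hintegral
  have hcancel : exp (-β * t) * exp (β * t) = 1 := by rw [← Real.exp_add]; simp
  have hrate : 1 / ε * -(γf / ε - β)⁻¹ = (ε * β - γf)⁻¹ := by
    rw [← inv_neg, neg_sub, ← one_div, ← one_div, div_mul_div_comm, one_mul, mul_sub,
      mul_div_cancel₀ _ hε.ne']
  rw [LPfast_sub_LPfast hint hint', norm_smul, Real.norm_of_nonneg (by positivity)]
  calc _ ≤ exp (-β * t) * (1 / ε * (K * N * exp (β * t) * -(γf / ε - β)⁻¹)) := by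
        gcongr
    _ = exp (-β * t) * exp (β * t) * (K / (ε * β - γf) * N) := by
        rw [div_eq_mul_inv K, ← hrate]; ring
    _ = K / (ε * β - γf) * N := by rw [hcancel, one_mul]

theorem negNorm_sub_le_of_eq_LPfast [NormedAddCommGroup X] [SecondCountableTopology X]
    [MeasurableSpace X] [BorelSpace X] [CompleteSpace E₂] [SecondCountableTopology E₂]
    [MeasurableSpace E₂] [BorelSpace E₂]
    (hF : ∀ τ ≥ (0 : ℝ), ∀ v : E₂, ‖NormedSpace.exp (τ • F) v‖ ≤ exp (γf * τ) * ‖v‖)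
    (hε : 0 < ε) (hβ : γf < ε * β) (hgm : ∀ x y, Measurable fun s => g s x y)
    (hgl : ∀ s x₁ y₁ x₂ y₂, ‖g s x₁ y₁ - g s x₂ y₂‖ ≤ K * (‖x₁ - x₂‖ + ‖y₁ - y₂‖)) (hK : 0 ≤ K)
    {M : ℝ} (hg0 : ∀ s ≤ 0, ‖g s 0 0‖ ≤ M * exp (β * s))
    (hx : MemCneg β x) (hy : MemCneg β y) (hx' : MemCneg β x') (hy' : MemCneg β y')
    (hfix : ∀ t ≤ 0, y t = LPfast F g ε x y t) (hfix' : ∀ t ≤ 0, y' t = LPfast F g ε x' y' t)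
    {N : ℝ} (hxy : ∀ s ≤ 0, ‖x s - x' s‖ + ‖y s - y' s‖ ≤ N * exp (β * s)) :
    negNorm β (fun t => y t - y' t) ≤ K / (ε * β - γf) * N :=
  negNorm_le fun t ht => by
    rw [hfix t ht, hfix' t ht]
    exact exp_neg_mul_norm_LPfast_sub_LPfast_le hF hε hβ hgl hK hxy ht
      (integrableOn_LPfast_integrand hε hβ hF hgm hgl hK hg0 hx hy ht)
      (integrableOn_LPfast_integrand hε hβ hF hgm hgl hK hg0 hx' hy' ht)

end FastComponent

theorem lyapunovPerron_fixed_point_lipschitz_in_initial_general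
    {E₁ E₂ : Type*}
    [NormedAddCommGroup E₁] [NormedSpace ℝ E₁] [FiniteDimensional ℝ E₁] [MeasurableSpace E₁] [BorelSpace E₁]
    [NormedAddCommGroup E₂] [NormedSpace ℝ E₂] [FiniteDimensional ℝ E₂] [MeasurableSpace E₂] [BorelSpace E₂]
    (S : E₁ →L[ℝ] E₁) (F : E₂ →L[ℝ] E₂)
    (γs γf γ K ε : ℝ)
    (hγs : 0 < γs) (hγ : 0 < γ) (hK : 0 < K)
    (hgap : K < -(γ + γf)) (hε : 0 < ε)
    (hS : ∀ t ≤ (0:ℝ), ∀ x : E₁, ‖NormedSpace.exp (t • S) x‖ ≤ Real.exp (γs * t) * ‖x‖)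
    (hF : ∀ t ≥ (0:ℝ), ∀ y : E₂, ‖NormedSpace.exp (t • F) y‖ ≤ Real.exp (γf * t) * ‖y‖)
    (g1 : ℝ → E₁ → E₂ → E₁) (g2 : ℝ → E₁ → E₂ → E₂)
    (hg1m : ∀ x y, Measurable fun t => g1 t x y)
    (hg2m : ∀ x y, Measurable fun t => g2 t x y)
    (hg1l : ∀ t x₁ y₁ x₂ y₂, ‖g1 t x₁ y₁ - g1 t x₂ y₂‖ ≤ K * (‖x₁ - x₂‖ + ‖y₁ - y₂‖))
    (hg2l : ∀ t x₁ y₁ x₂ y₂, ‖g2 t x₁ y₁ - g2 t x₂ y₂‖ ≤ K * (‖x₁ - x₂‖ + ‖y₁ - y₂‖))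
    (hg0 : ∃ M, ∀ t ≤ (0:ℝ),
      Real.exp ((γ/ε) * t) * (‖g1 t 0 0‖ + ‖g2 t 0 0‖) ≤ M)
    (hρ : (ε * K / (γ + ε * γs) - K / (γ + γf)) < 1) :
    ∀ (x0 x0' : E₁) (xh : ℝ → E₁) (yh : ℝ → E₂) (xh' : ℝ → E₁) (yh' : ℝ → E₂),
      (MemCneg (-γ/ε) xh ∧ MemCneg (-γ/ε) yh) →
      (∀ t ≤ (0:ℝ), xh t = LPslow S g1 x0 xh yh t ∧ yh t = LPfast F g2 ε xh yh t) →
      (MemCneg (-γ/ε) xh' ∧ MemCneg (-γ/ε) yh') →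
      (∀ t ≤ (0:ℝ), xh' t = LPslow S g1 x0' xh' yh' t ∧ yh' t = LPfast F g2 ε xh' yh' t) →
      negNorm (-γ/ε) (fun t => xh t - xh' t) + negNorm (-γ/ε) (fun t => yh t - yh' t) ≤
        ‖x0 - x0'‖ / (1 - (ε * K / (γ + ε * γs) - K / (γ + γf))) := by
  intro x0 x0' xh yh xh' yh' ⟨hx, hy⟩ hfix ⟨hx', hy'⟩ hfix'
  set β := -γ / ε with hβ
  have hslow_rate : β < γs := (div_neg_of_neg_of_pos (neg_neg_of_pos hγ) hε).trans hγs
  have hfast_rate : γf < ε * β := by rw [mul_div_cancel₀ _ hε.ne']; linarith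
  obtain ⟨M, hM⟩ := hg0
  have hg0 : ∀ s ≤ 0, ‖g1 s 0 0‖ + ‖g2 s 0 0‖ ≤ M * exp (β * s) := fun s hs =>
    le_mul_exp_of_exp_neg_mul_le (by rw [hβ, neg_div, neg_neg]; exact hM s hs)
  have hg10 : ∀ s ≤ 0, ‖g1 s 0 0‖ ≤ M * exp (β * s) := fun s hs =>
    (le_add_of_nonneg_right (norm_nonneg _)).trans (hg0 s hs)
  have hg20 : ∀ s ≤ 0, ‖g2 s 0 0‖ ≤ M * exp (β * s) := fun s hs =>
    (le_add_of_nonneg_left (norm_nonneg _)).trans (hg0 s hs)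
  set N := negNorm β (fun t => xh t - xh' t) + negNorm β (fun t => yh t - yh' t)
  have hxy : ∀ s ≤ 0, ‖xh s - xh' s‖ + ‖yh s - yh' s‖ ≤ N * exp (β * s) := fun s hs => by
    rw [add_mul]; exact add_le_add ((hx.sub hx').norm_le hs) ((hy.sub hy').norm_le hs)
  have hslow := negNorm_sub_le_of_eq_LPslow hS hslow_rate hg1m hg1l hK.le hg10 hx hy hx' hy'
    (fun t ht => (hfix t ht).1) (fun t ht => (hfix' t ht).1) hxy
  have hfast := negNorm_sub_le_of_eq_LPfast hF hε hfast_rate hg2m hg2l hK.le hg20 hx hy hx' hy'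
    (fun t ht => (hfix t ht).2) (fun t ht => (hfix' t ht).2) hxy
  have hslow_coeff : K / (γs - β) = ε * K / (γ + ε * γs) := by
    rw [hβ, neg_div, sub_neg_eq_add, add_div' _ _ _ hε.ne', div_div_eq_mul_div]; ring
  have hfast_coeff : K / (ε * β - γf) = -(K / (γ + γf)) := by
    rw [hβ, mul_div_cancel₀ _ hε.ne', ← div_neg, neg_add']
  rw [hslow_coeff] at hslow
  rw [hfast_coeff] at hfast
  rw [le_div_iff₀ (sub_pos.2 hρ)]
  linarith

/-- Lipschitz dependence of the Lyapunov–Perron fixed point on the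
initial slow value: `‖φ^ε(·,x₀) - φ^ε(·,x₀')‖ ≤ ‖x₀ - x₀'‖/(1 - ρ(ε))`. -/
theorem lyapunovPerron_fixed_point_lipschitz_in_initial
    {E₁ E₂ : Type*}
    [NormedAddCommGroup E₁] [NormedSpace ℝ E₁] [FiniteDimensional ℝ E₁] [MeasurableSpace E₁] [BorelSpace E₁]
    [NormedAddCommGroup E₂] [NormedSpace ℝ E₂] [FiniteDimensional ℝ E₂] [MeasurableSpace E₂] [BorelSpace E₂]
    (S : E₁ →L[ℝ] E₁) (F : E₂ →L[ℝ] E₂)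
    (γs γf γ K ε : ℝ)
    (hγs : 0 < γs) (hγf : γf < 0) (hγ : 0 < γ) (hK : 0 < K)
    (hgap : K < -(γ + γf)) (hε : 0 < ε)
    (hS : ∀ t ≤ (0:ℝ), ∀ x : E₁, ‖NormedSpace.exp (t • S) x‖ ≤ Real.exp (γs * t) * ‖x‖)
    (hF : ∀ t ≥ (0:ℝ), ∀ y : E₂, ‖NormedSpace.exp (t • F) y‖ ≤ Real.exp (γf * t) * ‖y‖)
    (g1 : ℝ → E₁ → E₂ → E₁) (g2 : ℝ → E₁ → E₂ → E₂)
    (hg1m : ∀ x y, Measurable fun t => g1 t x y)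
    (hg2m : ∀ x y, Measurable fun t => g2 t x y)
    (hg1b : ∀ x y r, ∃ M, ∀ t : ℝ, |t| ≤ r → ‖g1 t x y‖ ≤ M)
    (hg2b : ∀ x y r, ∃ M, ∀ t : ℝ, |t| ≤ r → ‖g2 t x y‖ ≤ M)
    (hg1l : ∀ t x₁ y₁ x₂ y₂, ‖g1 t x₁ y₁ - g1 t x₂ y₂‖ ≤ K * (‖x₁ - x₂‖ + ‖y₁ - y₂‖))
    (hg2l : ∀ t x₁ y₁ x₂ y₂, ‖g2 t x₁ y₁ - g2 t x₂ y₂‖ ≤ K * (‖x₁ - x₂‖ + ‖y₁ - y₂‖))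
    (hg0 : ∃ M, ∀ t ≤ (0:ℝ),
      Real.exp ((γ/ε) * t) * (‖g1 t 0 0‖ + ‖g2 t 0 0‖) ≤ M)
    (hρ : (ε * K / (γ + ε * γs) - K / (γ + γf)) < 1) :
    ∀ (x0 x0' : E₁) (xh : ℝ → E₁) (yh : ℝ → E₂) (xh' : ℝ → E₁) (yh' : ℝ → E₂),
      (MemCneg (-γ/ε) xh ∧ MemCneg (-γ/ε) yh) →
      (∀ t ≤ (0:ℝ), xh t = LPslow S g1 x0 xh yh t ∧ yh t = LPfast F g2 ε xh yh t) →
      (MemCneg (-γ/ε) xh' ∧ MemCneg (-γ/ε) yh') →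
      (∀ t ≤ (0:ℝ), xh' t = LPslow S g1 x0' xh' yh' t ∧ yh' t = LPfast F g2 ε xh' yh' t) →
      negNorm (-γ/ε) (fun t => xh t - xh' t) + negNorm (-γ/ε) (fun t => yh t - yh' t) ≤
        ‖x0 - x0'‖ / (1 - (ε * K / (γ + ε * γs) - K / (γ + γf))) :=
  lyapunovPerron_fixed_point_lipschitz_in_initial_general S F γs γf γ K ε hγs hγ hK hgap hε hS hF g1
    g2 hg1m hg2m hg1l hg2l hg0 hρ
end
end
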